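/- arXiv:2411.09460 — 5 statements merged into one kernel-verified Lean document; each statement's English description precedes it below -/
import Mathlib

section
/- Let w and r be positive integers with r ≤ w. For a composition-vector c = (c_1,...,c_w) of nonnegative integers satisfying Σ_{j=1}^w c_j = r and Σ_{j=1}^w j·c_j = w, the number of binary (s/f) words of length w with exactly r letters 's', whose multiset of cyclic gaps between consecutive 's' letters (gap = cyclic distance from one 's' to the next 's') has exactly c_j gaps of length j for each j, equals (r-1)! · w / (c_1! c_2! ⋯ c_w!). -/
open scoped Classical

/-- The cyclic gap from position `p` to the next element of `S` (cyclically):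
the least positive `k` such that `p + k ∈ S`. -/
noncomputable def cycGap {w : ℕ} [NeZero w] (S : Finset (ZMod w)) (p : ZMod w) : ℕ :=
  sInf {k : ℕ | 0 < k ∧ p + (k : ZMod w) ∈ S}

/-!
Double count the pairs `(S, p)` with `p ∈ S`, where `S` ranges over the sets of `r` positions
whose cyclic gaps have content `c`. Each such `S` gives `r` pairs. For a fixed `p`, reading the
gaps of `S` cyclically starting at `p` gives a word `λ ∈ {1, …, w}ʳ` of content `c`, and `S` is
recovered as `p` plus the partial sums of `λ`; so each of the `w` points lies in exactly as many
sets as there are such words, namely `r! / ∏ c_j!`. Hence `#sets · r = w · r! / ∏ c_j!`.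
-/

open Finset Nat

section Content

variable {α : Type*} [DecidableEq α]

def wordsOfContent (r : ℕ) (s : Finset α) (c : α → ℕ) : Finset (Fin r → α) :=
  {f ∈ Fintype.piFinset fun _ => s | ∀ j ∈ s, #{i | f i = j} = c j}

lemma card_filter_cons_eq {r : ℕ} (a : α) (f : Fin r → α) (j : α) :
    #{i | (Fin.cons a f : Fin (r + 1) → α) i = j} = (if a = j then 1 else 0) + #{i | f i = j} := by
  simp only [card_filter, Fin.sum_univ_succ, Fin.cons_zero, Fin.cons_succ]

lemma cons_mem_wordsOfContent_iff {r : ℕ} {s : Finset α} {c : α → ℕ} {a : α} (ha : a ∈ s)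
    (hca : c a ≠ 0) (f : Fin r → α) :
    (Fin.cons a f : Fin (r + 1) → α) ∈ wordsOfContent (r + 1) s c ↔
      f ∈ wordsOfContent r s (Function.update c a (c a - 1)) := by
  simp only [wordsOfContent, mem_filter, Fintype.mem_piFinset, Fin.forall_fin_succ,
    Fin.cons_zero, Fin.cons_succ, card_filter_cons_eq]
  refine and_congr (and_iff_right ha) (forall₂_congr fun j _ => ?_)
  rcases eq_or_ne a j with rfl | hne
  · simp only [if_true, Function.update_self]
    omega
  · simp [hne, Function.update_of_ne hne.symm]

lemma card_wordsOfContent_filter_head_mul {r : ℕ} {s : Finset α} {c : α → ℕ}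
    (ih : ∀ c' : α → ℕ, ∑ j ∈ s, c' j = r → #(wordsOfContent r s c') * ∏ j ∈ s, (c' j)! = r !)
    (hc : ∑ j ∈ s, c j = r + 1) {a : α} (ha : a ∈ s) :
    #{f ∈ wordsOfContent (r + 1) s c | f 0 = a} * ∏ j ∈ s, (c j)! = c a * r ! := by
  rcases eq_or_ne (c a) 0 with hca | hca
  · suffices {f ∈ wordsOfContent (r + 1) s c | f 0 = a} = ∅ by simp [this, hca]
    refine filter_eq_empty_iff.2 fun f hf hfa => ?_
    have hpos : 0 < #{i | f i = a} := card_pos.2 ⟨0, by simp [hfa]⟩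
    simp only [wordsOfContent, mem_filter] at hf
    have := hf.2 a ha
    omega
  set c' := Function.update c a (c a - 1)
  have hcard : #{f ∈ wordsOfContent (r + 1) s c | f 0 = a} = #(wordsOfContent r s c') := by
    refine card_nbij' Fin.tail (fun f => Fin.cons a f) (fun f hf => ?_) (fun f hf => ?_)
      (fun f hf => ?_) fun f _ => Fin.tail_cons (α := fun _ => α) a f
    · simp only [coe_filter, Set.mem_ofPred_eq] at hf
      rw [mem_coe, ← cons_mem_wordsOfContent_iff ha hca, ← hf.2, Fin.cons_self_tail]
      exact hf.1
    · simpa [cons_mem_wordsOfContent_iff ha hca] using mem_coe.1 hf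
    · simp only [coe_filter, Set.mem_ofPred_eq] at hf
      rw [← hf.2]
      exact Fin.cons_self_tail f
  have hsum : ∑ j ∈ s, c' j = r := by
    rw [sum_update_of_mem ha, sdiff_singleton_eq_erase]
    rw [← add_sum_erase s c ha] at hc
    omega
  have hprod : ∏ j ∈ s, (c j)! = c a * ∏ j ∈ s, (c' j)! := by
    have hc' : ∏ j ∈ s, (c' j)! = (c a - 1)! * ∏ j ∈ s.erase a, (c j)! := by
      rw [← mul_prod_erase s _ ha]
      congr 1
      · simp [c']
      · exact prod_congr rfl fun j hj => by simp [c', Function.update_of_ne (ne_of_mem_erase hj)]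
    rw [hc', ← mul_prod_erase s _ ha, ← mul_assoc, mul_factorial_pred hca]
  rw [hcard, hprod, mul_left_comm, ih c' hsum]

theorem card_wordsOfContent_mul_prod_factorial {r : ℕ} {s : Finset α} {c : α → ℕ}
    (hc : ∑ j ∈ s, c j = r) : #(wordsOfContent r s c) * ∏ j ∈ s, (c j)! = r ! := by
  induction r generalizing c with
  | zero =>
    have hc0 : ∀ j ∈ s, c j = 0 := sum_eq_zero_iff.1 hc
    have hW : wordsOfContent 0 s c = univ :=
      eq_univ_of_forall fun f => mem_filter.2
        ⟨Fintype.mem_piFinset.2 fun i => i.elim0, fun j hj => by simp [hc0 j hj]⟩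
    rw [hW, prod_eq_one fun j hj => by rw [hc0 j hj, factorial_zero]]
    simp
  | succ r ih =>
    have hhead : ∀ f ∈ wordsOfContent (r + 1) s c, f 0 ∈ s := fun f hf =>
      Fintype.mem_piFinset.1 (mem_filter.1 hf).1 0
    rw [card_eq_sum_card_fiberwise hhead, sum_mul,
      sum_congr rfl fun a ha => card_wordsOfContent_filter_head_mul (fun _ => ih) hc ha,
      ← sum_mul, hc, factorial_succ]

lemma sum_comp_of_mem_wordsOfContent {β : Type*} [AddCommMonoid β] {r : ℕ} {s : Finset α}
    {c : α → ℕ} {f : Fin r → α} (hf : f ∈ wordsOfContent r s c) (g : α → β) :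
    ∑ i, g (f i) = ∑ j ∈ s, c j • g j := by
  simp only [wordsOfContent, mem_filter, Fintype.mem_piFinset] at hf
  rw [← sum_fiberwise_of_maps_to (t := s) (fun i _ => hf.1 i)]
  refine sum_congr rfl fun j hj => ?_
  rw [sum_congr rfl fun i hi => congrArg g (mem_filter.1 hi).2, sum_const, hf.2 j hj]

end Content

section PartialSum

variable {r : ℕ} (lam : Fin r → ℕ)

def partialSum (k : ℕ) : ℕ := ∑ i : Fin r with i.val < k, lam i

lemma partialSum_zero : partialSum lam 0 = 0 := by
  simp [partialSum]

lemma partialSum_succ {k : ℕ} (hk : k < r) :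
    partialSum lam (k + 1) = partialSum lam k + lam ⟨k, hk⟩ := by
  have : univ.filter (fun i : Fin r => i.val < k + 1) =
      insert ⟨k, hk⟩ (univ.filter fun i : Fin r => i.val < k) := by
    ext i
    simp only [Order.lt_add_one_iff, mem_filter, mem_univ, true_and, mem_insert, Fin.ext_iff]
    omega
  rw [partialSum, this, sum_insert (by simp), add_comm]
  rfl

lemma partialSum_of_le {k : ℕ} (hk : r ≤ k) : partialSum lam k = ∑ i, lam i := by
  rw [partialSum, filter_true_of_mem fun i _ => i.isLt.trans_le hk]

lemma monotone_partialSum : Monotone (partialSum lam) := fun _ _ hkl =>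
  sum_le_sum_of_subset fun i => by simp only [mem_filter, mem_univ, true_and]; omega

variable {lam}

lemma partialSum_lt_partialSum (hpos : ∀ i, 0 < lam i) {k l : ℕ} (hkl : k < l) (hl : l ≤ r) :
    partialSum lam k < partialSum lam l :=
  calc partialSum lam k < partialSum lam (k + 1) := by
        rw [partialSum_succ lam (hkl.trans_le hl)]
        exact Nat.lt_add_of_pos_right (hpos _)
    _ ≤ partialSum lam l := monotone_partialSum lam hkl

end PartialSum

lemma natCast_inj_of_lt {w a b : ℕ} (ha : a < w) (hb : b < w) (h : (a : ZMod w) = b) : a = b := by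
  rwa [ZMod.natCast_eq_natCast_iff', Nat.mod_eq_of_lt ha, Nat.mod_eq_of_lt hb] at h

def gapPositions {w r : ℕ} (p : ZMod w) (lam : Fin r → ℕ) : Finset (ZMod w) :=
  univ.image fun k : Fin r => p + (partialSum lam k : ZMod w)

section GapPositions

variable {w r : ℕ} {lam : Fin r → ℕ}

lemma partialSum_lt_of_lt (hpos : ∀ i, 0 < lam i) (hsum : ∑ i, lam i = w) {k : ℕ} (hk : k < r) :
    partialSum lam k < w := by
  simpa [partialSum_of_le lam le_rfl, hsum] using partialSum_lt_partialSum hpos hk le_rfl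

lemma injective_gapPosition (hpos : ∀ i, 0 < lam i) (hsum : ∑ i, lam i = w) (p : ZMod w) :
    Function.Injective fun k : Fin r => p + (partialSum lam k : ZMod w) := by
  have hmono : StrictMono fun k : Fin r => partialSum lam k := fun _ b hab =>
    partialSum_lt_partialSum hpos hab b.isLt.le
  intro a b hab
  exact hmono.injective <| natCast_inj_of_lt (partialSum_lt_of_lt hpos hsum a.isLt)
    (partialSum_lt_of_lt hpos hsum b.isLt) (add_left_cancel hab)

lemma card_gapPositions (hpos : ∀ i, 0 < lam i) (hsum : ∑ i, lam i = w) (p : ZMod w) :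
    #(gapPositions p lam) = r := by
  rw [gapPositions, card_image_of_injective _ (injective_gapPosition hpos hsum p), Finset.card_fin]

variable [NeZero w]

lemma cycGap_gapPositions (hpos : ∀ i, 0 < lam i) (hsum : ∑ i, lam i = w)
    (p : ZMod w) (k : Fin r) :
    cycGap (gapPositions p lam) (p + partialSum lam k) = lam k := by
  have hsucc : partialSum lam (k + 1) = partialSum lam k + lam k := partialSum_succ lam k.isLt
  have hnext : partialSum lam (k + 1) ≤ w := by
    rw [← hsum, ← partialSum_of_le lam le_rfl]
    exact monotone_partialSum lam k.isLt
  have hmem : p + (partialSum lam k : ZMod w) + (lam k : ℕ) ∈ gapPositions p lam := by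
    rw [add_assoc, ← Nat.cast_add, ← hsucc]
    rcases Nat.lt_or_eq_of_le (Nat.succ_le_of_lt k.isLt) with hlt | hlast
    · exact mem_image.2 ⟨⟨k + 1, hlt⟩, mem_univ _, rfl⟩
    · rw [partialSum_of_le lam hlast.ge, hsum, ZMod.natCast_self, add_zero]
      exact mem_image.2 ⟨⟨0, by omega⟩, mem_univ _, by simp [partialSum_zero]⟩
  have hgap : ∀ t, t < lam k → p + (partialSum lam k : ZMod w) + (t : ℕ) ∈ gapPositions p lam →
      t = 0 := by
    intro t htk ht
    obtain ⟨m, -, hm⟩ := mem_image.1 ht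
    have heq : partialSum lam m = partialSum lam k + t := by
      refine natCast_inj_of_lt (partialSum_lt_of_lt hpos hsum m.isLt) (by omega) ?_
      rw [Nat.cast_add, ← add_right_inj p, ← add_assoc, hm]
    rcases le_or_gt (m : ℕ) k with h | h
    · have := monotone_partialSum lam h
      omega
    · have := monotone_partialSum lam (show (k : ℕ) + 1 ≤ m from h)
      omega
  refine le_antisymm (Nat.sInf_le ⟨hpos k, hmem⟩) (le_csInf ⟨_, hpos k, hmem⟩ ?_)
  rintro t ⟨ht0, ht⟩
  by_contra! htk
  exact ht0.ne' (hgap t htk ht)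

lemma card_filter_cycGap_gapPositions (hpos : ∀ i, 0 < lam i) (hsum : ∑ i, lam i = w)
    (p : ZMod w) (j : ℕ) :
    #{q ∈ gapPositions p lam | cycGap (gapPositions p lam) q = j} = #{i | lam i = j} := by
  have hcyc := cycGap_gapPositions hpos hsum p
  unfold gapPositions at hcyc ⊢
  rw [filter_image, card_image_of_injective _ (injective_gapPosition hpos hsum p)]
  simp only [hcyc]

lemma gapPositions_inj (hpos : ∀ i, 0 < lam i) (hsum : ∑ i, lam i = w) {lam' : Fin r → ℕ}
    (hpos' : ∀ i, 0 < lam' i) (hsum' : ∑ i, lam' i = w) (p : ZMod w)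
    (h : gapPositions p lam = gapPositions p lam') : lam = lam' := by
  have hps : ∀ k, partialSum lam k = partialSum lam' k := by
    intro k
    induction k with
    | zero => rw [partialSum_zero, partialSum_zero]
    | succ k ih =>
      rcases lt_or_ge k r with hk | hk
      · have hgap := cycGap_gapPositions hpos hsum p ⟨k, hk⟩
        rw [h, Fin.val_mk, ih, cycGap_gapPositions hpos' hsum' p ⟨k, hk⟩] at hgap
        rw [partialSum_succ lam hk, partialSum_succ lam' hk, ih, hgap]
      · rw [partialSum_of_le lam (by omega), partialSum_of_le lam' (by omega), hsum, hsum']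
  funext i
  have hsucc := partialSum_succ lam i.isLt
  have hsucc' := partialSum_succ lam' i.isLt
  rw [hps, hps, Fin.eta] at hsucc
  rw [Fin.eta] at hsucc'
  omega

end GapPositions

lemma exists_partialSum_eq {w r : ℕ} (hr : 0 < r) {E : Fin r → ℕ} (hE : StrictMono E)
    (h0 : E ⟨0, hr⟩ = 0) (hlt : ∀ k, E k < w) :
    ∃ lam : Fin r → ℕ, (∀ i, 0 < lam i) ∧ ∑ i, lam i = w ∧
      ∀ k : Fin r, partialSum lam k = E k := by
  set lam : Fin r → ℕ := fun k => (if h : k.1 + 1 < r then E ⟨k + 1, h⟩ else w) - E k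
  have hstep : ∀ k : Fin r, E k < E k + lam k := by
    intro k
    by_cases h : k.1 + 1 < r
    · have := hE (show k < ⟨k + 1, h⟩ from Fin.mk_lt_mk.2 k.1.lt_succ_self)
      simp only [lam, dif_pos h]
      omega
    · have := hlt k
      simp only [lam, dif_neg h]
      omega
  have hps : ∀ k (hk : k < r), partialSum lam k = E ⟨k, hk⟩ := by
    intro k
    induction k with
    | zero => exact fun _ => by rw [partialSum_zero, h0]
    | succ k ih =>
      intro hk
      rw [partialSum_succ lam (by omega), ih (by omega)]
      simp only [lam, dif_pos hk]
      have := hE (show (⟨k, by omega⟩ : Fin r) < ⟨k + 1, hk⟩ from Fin.mk_lt_mk.2 k.lt_succ_self)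
      omega
  refine ⟨lam, fun i => by have := hstep i; omega, ?_, fun k => hps k k.isLt⟩
  have hlast : r - 1 + 1 = r := Nat.sub_add_cancel hr
  have hsucc := partialSum_succ lam (show r - 1 < r by omega)
  rw [hlast, hps (r - 1) (by omega)] at hsucc
  rw [← partialSum_of_le lam le_rfl, hsucc]
  simp only [lam, hlast, lt_irrefl, dite_false]
  have := hlt ⟨r - 1, by omega⟩
  omega

lemma exists_gapPositions_eq {w r : ℕ} [NeZero w] {S : Finset (ZMod w)} (hS : #S = r)
    {p : ZMod w} (hp : p ∈ S) :
    ∃ lam : Fin r → ℕ, (∀ i, 0 < lam i) ∧ ∑ i, lam i = w ∧ gapPositions p lam = S := by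
  have hr : 0 < r := hS ▸ card_pos.2 ⟨p, hp⟩
  -- the offsets of the points of `S` from `p`, in increasing order, are the partial sums of `lam`
  set V := S.image fun q => (q - p).val
  have hV : #V = r := by
    rw [card_image_of_injective _ fun a b h => sub_left_injective (ZMod.val_injective w h), hS]
  have hV0 : 0 ∈ V := mem_image.2 ⟨p, hp, by simp⟩
  obtain ⟨lam, hpos, hsum, hps⟩ := exists_partialSum_eq hr (V.orderEmbOfFin hV).strictMono
    (by simpa [orderEmbOfFin_zero hV hr] using min'_le V 0 hV0)
    (fun k => by
      obtain ⟨q, -, hq⟩ := mem_image.1 (V.orderEmbOfFin_mem hV k)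
      exact hq ▸ ZMod.val_lt _)
  refine ⟨lam, hpos, hsum, eq_of_subset_of_card_le (fun x hx => ?_) ?_⟩
  · obtain ⟨k, -, rfl⟩ := mem_image.1 hx
    obtain ⟨q, hq, hqk⟩ := mem_image.1 (V.orderEmbOfFin_mem hV k)
    rwa [hps, ← hqk, ZMod.natCast_zmod_val, add_sub_cancel]
  · rw [hS, card_gapPositions hpos hsum]

lemma pos_and_sum_eq_of_mem_wordsOfContent {w r : ℕ} {c : ℕ → ℕ}
    (hc : ∑ j ∈ Icc 1 w, j * c j = w) {lam : Fin r → ℕ}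
    (hlam : lam ∈ wordsOfContent r (Icc 1 w) c) :
    (∀ i, 0 < lam i) ∧ ∑ i, lam i = w := by
  refine ⟨fun i => (mem_Icc.1 (Fintype.mem_piFinset.1 (mem_filter.1 hlam).1 i)).1, ?_⟩
  rw [← hc]
  exact (sum_comp_of_mem_wordsOfContent hlam id).trans (sum_congr rfl fun j _ => mul_comm _ _)

noncomputable def gapContentSets (w r : ℕ) [NeZero w] (c : ℕ → ℕ) : Finset (Finset (ZMod w)) :=
  {S | #S = r ∧ ∀ j ∈ Icc 1 w, #{p ∈ S | cycGap S p = j} = c j}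

section GapContentSets

variable {w r : ℕ} [NeZero w] {c : ℕ → ℕ}

lemma mem_gapContentSets {S : Finset (ZMod w)} :
    S ∈ gapContentSets w r c ↔ #S = r ∧ ∀ j ∈ Icc 1 w, #{p ∈ S | cycGap S p = j} = c j := by
  simp [gapContentSets]

lemma card_filter_mem_gapContentSets (hr : 0 < r) (hc : ∑ j ∈ Icc 1 w, j * c j = w)
    (p : ZMod w) : #{S ∈ gapContentSets w r c | p ∈ S} = #(wordsOfContent r (Icc 1 w) c) := by
  symm
  refine card_nbij (gapPositions p) (fun lam hlam => ?_) (fun lam hlam lam' hlam' h => ?_)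
    (fun S hS => ?_)
  · obtain ⟨hpos, hsum⟩ := pos_and_sum_eq_of_mem_wordsOfContent hc (mem_coe.1 hlam)
    refine mem_filter.2 ⟨mem_gapContentSets.2 ⟨card_gapPositions hpos hsum p, fun j hj => ?_⟩, ?_⟩
    · rw [card_filter_cycGap_gapPositions hpos hsum]
      exact (mem_filter.1 hlam).2 j hj
    · exact mem_image.2 ⟨⟨0, hr⟩, mem_univ _, by simp [partialSum_zero]⟩
  · obtain ⟨hpos, hsum⟩ := pos_and_sum_eq_of_mem_wordsOfContent hc (mem_coe.1 hlam)
    obtain ⟨hpos', hsum'⟩ := pos_and_sum_eq_of_mem_wordsOfContent hc (mem_coe.1 hlam')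
    exact gapPositions_inj hpos hsum hpos' hsum' p h
  · obtain ⟨hSG, hpS⟩ := mem_filter.1 (mem_coe.1 hS)
    obtain ⟨hcard, hcontent⟩ := mem_gapContentSets.1 hSG
    obtain ⟨lam, hpos, hsum, rfl⟩ := exists_gapPositions_eq hcard hpS
    have hle : ∀ i, lam i ≤ w := fun i =>
      hsum ▸ single_le_sum (fun _ _ => Nat.zero_le _) (mem_univ i)
    refine ⟨lam, mem_filter.2 ⟨Fintype.mem_piFinset.2 fun i => mem_Icc.2 ⟨hpos i, hle i⟩,
      fun j hj => ?_⟩, rfl⟩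
    rw [← card_filter_cycGap_gapPositions hpos hsum p]
    exact hcontent j hj

lemma card_gapContentSets_mul (hr : 0 < r) (hc : ∑ j ∈ Icc 1 w, j * c j = w) :
    #(gapContentSets w r c) * r = w * #(wordsOfContent r (Icc 1 w) c) := by
  rw [← sum_const_nat fun S hS => (mem_gapContentSets.1 hS).1,
    sum_card (card_filter_mem_gapContentSets hr hc), ZMod.card]

end GapContentSets

theorem stmt0_general (w r : ℕ) [NeZero w] (hr : 0 < r)
    (c : ℕ → ℕ)
    (hc1 : ∑ j ∈ Finset.Icc 1 w, c j = r)
    (hc2 : ∑ j ∈ Finset.Icc 1 w, j * c j = w) :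
    (Finset.univ.filter (fun S : Finset (ZMod w) =>
        S.card = r ∧ ∀ j ∈ Finset.Icc 1 w,
          (S.filter (fun p => cycGap S p = j)).card = c j)).card
      * ∏ j ∈ Finset.Icc 1 w, (c j).factorial
    = (r - 1).factorial * w := by
  change #(gapContentSets w r c) * _ = _
  refine Nat.eq_of_mul_eq_mul_right hr ?_
  calc (#(gapContentSets w r c) * ∏ j ∈ Icc 1 w, (c j)!) * r
      = w * (#(wordsOfContent r (Icc 1 w) c) * ∏ j ∈ Icc 1 w, (c j)!) := by
        rw [mul_right_comm, card_gapContentSets_mul hr hc2, mul_assoc]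
    _ = (r - 1)! * w * r := by
        rw [card_wordsOfContent_mul_prod_factorial hc1, ← mul_factorial_pred hr.ne']
        ring

/-- the number of cyclic sf-words of length `w` with exactly `r` letters `s`
(encoded as the `Finset` of positions of the `s` letters) whose multiset of cyclic gaps
has exactly `c j` gaps of length `j` (for each `j ∈ {1,…,w}`) equals
`(r-1)! · w / (c_1! ⋯ c_w!)`, stated multiplicatively. -/
theorem stmt0 (w r : ℕ) [NeZero w] (hr : 0 < r) (hrw : r ≤ w)
    (c : ℕ → ℕ)
    (hc1 : ∑ j ∈ Finset.Icc 1 w, c j = r)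
    (hc2 : ∑ j ∈ Finset.Icc 1 w, j * c j = w) :
    (Finset.univ.filter (fun S : Finset (ZMod w) =>
        S.card = r ∧ ∀ j ∈ Finset.Icc 1 w,
          (S.filter (fun p => cycGap S p = j)).card = c j)).card
      * ∏ j ∈ Finset.Icc 1 w, (c j).factorial
    = (r - 1).factorial * w :=
  stmt0_general w r hr c hc1 hc2
end

section
/- Let p be a prime, q ≥ 2p-1 coprime with p, L = pq, w = p. For 1 ≤ g ≠ g' ≤ p, the CRT sequences v_g and v_{g'} have Hamming cross-correlation at most 1 for every cyclic shift: for all τ ∈ Z_L, the number of t ∈ Z_L with v_g(t) = 1 and v_{g'}(t ⊕_L τ) = 1 is at most 1. -/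
/-!
Let `t₁, t₂` both contribute to the correlation, with indices `u₁, u₂` for `v_g` and `v₁, v₂`
for `v_{g'}`. Reducing `d = t₁ - t₂` modulo `q` gives `u₁ - u₂ ≡ d ≡ v₁ - v₂`; both differences
lie in `(-p, p)` and `q ≥ 2p - 1`, so `u₁ - u₂ = v₁ - v₂ =: D`. Reducing modulo `p` gives
`D g ≡ d ≡ D g'`, and as `p` is prime with `g ≢ g' (mod p)`, `p ∣ D`, i.e. `D = 0`. Then
`t₁ ≡ t₂` modulo both `p` and `q`, and the Chinese remainder theorem gives `t₁ = t₂`.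
-/

open scoped Classical

theorem Int.ModEq.eq_of_abs_sub_lt {n a b : ℤ} (h : a ≡ b [ZMOD n]) (hab : |a - b| < n) :
    a = b :=
  sub_eq_zero.mp (Int.eq_zero_of_abs_lt_dvd (Int.modEq_iff_dvd.mp h.symm) hab)

theorem Nat.ModEq.intCast_sub {n a b c d : ℕ} (h₁ : a ≡ b [MOD n]) (h₂ : c ≡ d [MOD n]) :
    (a : ℤ) - c ≡ b - d [ZMOD n] :=
  (Int.natCast_modEq_iff.mpr h₁).sub (Int.natCast_modEq_iff.mpr h₂)

theorem Nat.not_modEq_of_ne_of_pos_of_le {p g g' : ℕ} (hg1 : 1 ≤ g) (hgp : g ≤ p) (hg'1 : 1 ≤ g')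
    (hg'p : g' ≤ p) (hne : g ≠ g') : ¬ g ≡ g' [MOD p] := fun h =>
  hne (h.eq_of_abs_lt (by rw [abs_lt]; omega))

theorem Int.eq_of_modEq_of_abs_lt {p q D D' : ℤ} (hq : 2 * p - 1 ≤ q) (hD : |D| < p)
    (hD' : |D'| < p) (h : D ≡ D' [ZMOD q]) : D = D' :=
  h.eq_of_abs_sub_lt (by linarith [abs_sub D D'])

theorem Int.eq_zero_of_mul_modEq_mul {p D g g' : ℤ} (hp : Prime p) (hg : ¬ g ≡ g' [ZMOD p])
    (h : D * g ≡ D * g' [ZMOD p]) (hD : |D| < p) : D = 0 := by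
  rw [Int.modEq_iff_dvd, ← mul_sub] at h
  refine Int.eq_zero_of_abs_lt_dvd ((hp.dvd_mul.mp h).resolve_right fun hdvd => hg ?_) hD
  exact Int.modEq_iff_dvd.mpr hdvd

theorem Int.eq_zero_of_crt_congr {p q g g' d D D' : ℤ} (hp : Prime p) (hq : 2 * p - 1 ≤ q)
    (hg : ¬ g ≡ g' [ZMOD p]) (hD : |D| < p) (hD' : |D'| < p) (hdq : d ≡ D [ZMOD q])
    (hdq' : d ≡ D' [ZMOD q]) (hdp : d ≡ D * g [ZMOD p]) (hdp' : d ≡ D' * g' [ZMOD p]) :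
    D = 0 := by
  obtain rfl : D = D' := Int.eq_of_modEq_of_abs_lt hq hD hD' (hdq.symm.trans hdq')
  exact Int.eq_zero_of_mul_modEq_mul hp hg (hdp.symm.trans hdp') hD

theorem stmt4_general (p q g g' : ℕ) (hp : p.Prime) (hco : Nat.Coprime p q)
    (hq : 2 * p - 1 ≤ q) (hg1 : 1 ≤ g) (hgp : g ≤ p) (hg'1 : 1 ≤ g') (hg'p : g' ≤ p)
    (hne : g ≠ g') (τ : ℕ) :
    ((Finset.range (p * q)).filter (fun t =>
        (∃ u < p, t % p = (u * g) % p ∧ t % q = u % q) ∧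
        (∃ u < p, (t + τ) % (p * q) % p = (u * g') % p ∧
                  (t + τ) % (p * q) % q = u % q))).card ≤ 1 := by
  have hgg' : ¬ (g : ℤ) ≡ g' [ZMOD p] := by
    rw [Int.natCast_modEq_iff]
    exact Nat.not_modEq_of_ne_of_pos_of_le hg1 hgp hg'1 hg'p hne
  have hq' : 2 * (p : ℤ) - 1 ≤ q := by omega
  refine Finset.card_le_one.mpr fun t₁ ht₁ t₂ ht₂ => ?_
  simp only [Finset.mem_filter, Finset.mem_range, Nat.mod_mod_of_dvd _ (dvd_mul_right p q),
    Nat.mod_mod_of_dvd _ (dvd_mul_left q p)] at ht₁ ht₂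
  obtain ⟨ht₁, ⟨u₁, hu₁, ha₁, hb₁⟩, v₁, hv₁, hc₁, hd₁⟩ := ht₁
  obtain ⟨ht₂, ⟨u₂, hu₂, ha₂, hb₂⟩, v₂, hv₂, hc₂, hd₂⟩ := ht₂
  have hdp := Nat.ModEq.intCast_sub ha₁ ha₂
  have hdp' := Nat.ModEq.intCast_sub hc₁ hc₂
  have hdq' := Nat.ModEq.intCast_sub hd₁ hd₂
  push_cast [add_sub_add_right_eq_sub, ← sub_mul] at hdp hdp' hdq'
  have hu : (u₁ : ℤ) - u₂ = 0 :=
    Int.eq_zero_of_crt_congr (Nat.prime_iff_prime_int.mp hp) hq' hgg'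
      (Int.abs_sub_lt_of_lt_lt hu₂ hu₁) (Int.abs_sub_lt_of_lt_lt hv₂ hv₁)
      (Nat.ModEq.intCast_sub hb₁ hb₂) hdq' hdp hdp'
  obtain rfl : u₁ = u₂ := by omega
  have hpq : t₁ ≡ t₂ [MOD p * q] :=
    (Nat.modEq_and_modEq_iff_modEq_mul hco).mp ⟨ha₁.trans ha₂.symm, hb₁.trans hb₂.symm⟩
  exact hpq.eq_of_lt_of_lt ht₁ ht₂

/-- two distinct CRT sequences `v_g`, `v_{g'}` (`1 ≤ g ≠ g' ≤ p`,
`p` prime, `q ≥ 2p - 1` coprime with `p`, `L = pq`, `w = p`) have Hamming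
cross-correlation at most `1` for every cyclic shift `τ`. -/
theorem stmt4 (p q g g' : ℕ) (hp : p.Prime) (hco : Nat.Coprime p q)
    (hq : 2 * p - 1 ≤ q) (hg1 : 1 ≤ g) (hgp : g ≤ p) (hg'1 : 1 ≤ g') (hg'p : g' ≤ p)
    (hne : g ≠ g') (τ : ℕ) (hτ : τ < p * q) :
    ((Finset.range (p * q)).filter (fun t =>
        (∃ u < p, t % p = (u * g) % p ∧ t % q = u % q) ∧
        (∃ u < p, (t + τ) % (p * q) % p = (u * g') % p ∧
                  (t + τ) % (p * q) % q = u % q))).card ≤ 1 :=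
  stmt4_general p q g g' hp hco hq hg1 hgp hg'1 hg'p hne τ
end

section
/- Let N ≥ 2, and let w, L be positive integers with L ≥ w². Suppose each of N-1 'interfering' sequences, independently and uniformly shifted over Z_L, blocks any particular fixed '1' (out of w designated '1's) with exactly w shift values each, and is conflict-free for L - w² shift values. Then for 0 ≤ r ≤ w, the probability that a specific set of exactly r of the w '1's survive (the other w-r are each blocked) is P_r = (1/L^{N-1}) Σ_{n=w-r}^{N-1} binomial(N-1, n) (w-r)! S(n, w-r) w^n (L - w²)^{N-1-n}, where S(n, k) is the Stirling number of the second kind. Equivalently (w-r)! S(n, w-r) = Σ_{m=0}^{w-r} (-1)^m binomial(w-r, m) (w-r-m)^n. -/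
open scoped Classical

open Finset

/-!
A shift vector leaves exactly the set `A` of '1's unblocked iff every '1' of `A` is unblocked and
every other '1' is blocked. Keeping a set `S` of '1's unblocked forces every shift to avoid the
`|S| w` values blocking `S`, so `(L - |S| w)^(N-1)` shift vectors do so, and Möbius inversion over
the subsets of `Aᶜ` counts the event as `Σ_m (-1)^m C(w-r, m) (L - (r+m) w)^(N-1)`. Writing
`L - (r+m) w = (w-r-m) w + (L - w²)` and expanding binomially gives the stated sum; its terms with
`n < w - r` vanish because `Σ_m (-1)^m C(k,m) (k-m)^n` is the `k`-th forward difference of `x ↦ x^n`.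
-/

theorem card_filter_eq_eq_sum_powerset_compl {γ β : Type*} [Fintype γ] [Fintype β]
    [DecidableEq β] (U : γ → Finset β) (A : Finset β) :
    (#{g | U g = A} : ℤ) = ∑ T ∈ Aᶜ.powerset, (-1 : ℤ) ^ #T * #{g | A ∪ T ⊆ U g} := by
  have hpoint : ∀ g, ∑ T ∈ Aᶜ.powerset with A ∪ T ⊆ U g, (-1 : ℤ) ^ #T
      = if U g = A then 1 else 0 := by
    intro g
    by_cases hA : A ⊆ U g
    · have hfilter : {T ∈ Aᶜ.powerset | A ∪ T ⊆ U g} = (U g \ A).powerset := by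
        ext T
        simp only [mem_filter, mem_powerset, union_subset_iff, hA, true_and, subset_sdiff,
          subset_compl_iff_disjoint_right]
        tauto
      simp only [hfilter, sum_powerset_neg_one_pow_card, sdiff_eq_empty_iff_subset]
      exact if_congr ⟨fun h => h.antisymm hA, fun h => h.le⟩ rfl rfl
    · have hfilter : {T ∈ Aᶜ.powerset | A ∪ T ⊆ U g} = ∅ :=
        filter_false_of_mem fun T _ h => hA (subset_union_left.trans h)
      rw [hfilter, sum_empty, if_neg (fun h => hA h.ge)]
  calc (#{g | U g = A} : ℤ) = ∑ g, if U g = A then 1 else 0 := by simp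
    _ = ∑ g, ∑ T ∈ Aᶜ.powerset with A ∪ T ⊆ U g, (-1 : ℤ) ^ #T := by simp only [hpoint]
    _ = ∑ T ∈ Aᶜ.powerset, (-1 : ℤ) ^ #T * #{g | A ∪ T ⊆ U g} := by
      simp only [sum_filter, card_filter, Nat.cast_sum, Nat.cast_ite, Nat.cast_one,
        Nat.cast_zero, mul_sum, mul_ite, mul_one, mul_zero]
      exact sum_comm

theorem sum_range_alternating_choose_mul_pow_eq_zero {R : Type*} [CommRing R] {k n : ℕ}
    (h : n < k) :
    ∑ m ∈ range (k + 1), (-1 : R) ^ m * (k.choose m : R) * ((k - m : ℕ) : R) ^ n = 0 := by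
  have hdiff := congr_fun (fwdDiff_iter_pow_eq_zero_of_lt (R := R) h) 0
  rw [fwdDiff_iter_eq_sum_shift, ← sum_range_reflect, Pi.zero_apply] at hdiff
  rw [← hdiff]
  refine sum_congr rfl fun m hm => ?_
  have hmk : m ≤ k := Nat.lt_succ_iff.1 (mem_range.1 hm)
  rw [Nat.add_sub_cancel, Nat.sub_sub_self hmk, Nat.choose_symm hmk]
  simp [zsmul_eq_mul]

theorem sum_Icc_choose_mul_alternating_sum {R : Type*} [CommRing R] (k M : ℕ) (a b : R) :
    ∑ n ∈ Icc k M, (M.choose n : R) *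
        (∑ m ∈ range (k + 1), (-1 : R) ^ m * (k.choose m : R) * ((k - m : ℕ) : R) ^ n) *
        a ^ n * b ^ (M - n)
      = ∑ m ∈ range (k + 1),
          (-1 : R) ^ m * (k.choose m : R) * (((k - m : ℕ) : R) * a + b) ^ M := by
  have hvanish : ∀ n ∈ range (M + 1), n ∉ Icc k M →
      (M.choose n : R) *
        (∑ m ∈ range (k + 1), (-1 : R) ^ m * (k.choose m : R) * ((k - m : ℕ) : R) ^ n) *
        a ^ n * b ^ (M - n) = 0 := by
    intro n hn hnI
    have hnk : n < k := by simp only [mem_range, mem_Icc] at hn hnI; omega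
    rw [sum_range_alternating_choose_mul_pow_eq_zero hnk, mul_zero, zero_mul, zero_mul]
  have hIcc : Icc k M ⊆ range (M + 1) := fun n hn => by
    simp only [mem_Icc, mem_range] at hn ⊢; omega
  rw [sum_subset hIcc hvanish]
  simp only [add_pow, mul_sum, sum_mul]
  rw [sum_comm]
  refine sum_congr rfl fun m _ => sum_congr rfl fun n _ => ?_
  ring

variable {ι α β : Type*} [Fintype ι] [DecidableEq ι] [Fintype α] [Fintype β] [DecidableEq β]

def unblocked (block : α → Option β) (τ : ι → α) : Finset β :=
  {i | ∀ k, block (τ k) ≠ some i}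

variable {block : α → Option β} {w : ℕ}

theorem card_filter_forall_ne_some (hblock : ∀ i, #{a | block a = some i} = w) (S : Finset β) :
    #{a | ∀ i ∈ S, block a ≠ some i} = Fintype.card α - #S * w := by
  have hblocked : ({a | ¬ ∀ i ∈ S, block a ≠ some i} : Finset α)
      = S.biUnion fun i => {a | block a = some i} := by
    ext a
    simp
  have hcard : #({a | ¬ ∀ i ∈ S, block a ≠ some i} : Finset α) = #S * w := by
    rw [hblocked, card_biUnion, sum_const_nat fun i _ => hblock i]
    intro i _ j _ hij
    exact disjoint_filter.2 fun a _ hi hj => hij (Option.some_injective _ (hi.symm.trans hj))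
  rw [← hcard, ← card_univ, ← card_filter_add_card_filter_not (s := univ)
    (p := fun a => ∀ i ∈ S, block a ≠ some i), Nat.add_sub_cancel]

theorem card_subset_unblocked (hblock : ∀ i, #{a | block a = some i} = w) (S : Finset β) :
    #{τ : ι → α | S ⊆ unblocked block τ} = (Fintype.card α - #S * w) ^ Fintype.card ι := by
  have hpi : ({τ : ι → α | S ⊆ unblocked block τ} : Finset (ι → α))
      = Fintype.piFinset fun _ => {a | ∀ i ∈ S, block a ≠ some i} := by
    ext τ
    simp only [unblocked, mem_filter, mem_univ, true_and, subset_iff, Fintype.mem_piFinset]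
    exact ⟨fun h k i hi => h hi k, fun h i hi k => h k i hi⟩
  rw [hpi, Fintype.card_piFinset, prod_const, card_filter_forall_ne_some hblock, card_univ]

theorem card_unblocked_eq (hblock : ∀ i, #{a | block a = some i} = w) (A : Finset β) :
    (#{τ : ι → α | unblocked block τ = A} : ℤ)
      = ∑ m ∈ range (#Aᶜ + 1), (-1 : ℤ) ^ m * ((#Aᶜ).choose m : ℤ) *
          ((Fintype.card α - (#A + m) * w : ℕ) : ℤ) ^ Fintype.card ι := by
  set f : ℕ → ℤ := fun m => (-1) ^ m * ((Fintype.card α - (#A + m) * w : ℕ) : ℤ) ^ Fintype.card ι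
  have hterm : ∀ T ∈ Aᶜ.powerset,
      (-1 : ℤ) ^ #T * #{τ : ι → α | A ∪ T ⊆ unblocked block τ} = f #T := by
    intro T hT
    rw [card_subset_unblocked hblock,
      card_union_of_disjoint (disjoint_of_subset_right (mem_powerset.1 hT) disjoint_compl_right)]
    push_cast
    rfl
  rw [card_filter_eq_eq_sum_powerset_compl, sum_congr rfl hterm, sum_powerset_apply_card f]
  refine sum_congr rfl fun m _ => ?_
  rw [nsmul_eq_mul]
  ring

theorem stmt8_general (N w L r : ℕ) (hL : w ^ 2 ≤ L) (hr : r ≤ w)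
    (block : Fin L → Option (Fin w))
    (hblock : ∀ i : Fin w, (Finset.univ.filter (fun s => block s = some i)).card = w)
    (A : Finset (Fin w)) (hA : A.card = r) :
    ((Finset.univ.filter (fun τ : Fin (N - 1) → Fin L =>
          ∀ i : Fin w, i ∈ A ↔ ∀ k, block (τ k) ≠ some i)).card : ℝ) / (L : ℝ) ^ (N - 1)
    = (1 / (L : ℝ) ^ (N - 1)) *
        ∑ n ∈ Finset.Icc (w - r) (N - 1),
          ((N - 1).choose n : ℝ) *
            (∑ m ∈ Finset.range (w - r + 1),
              (-1 : ℝ) ^ m * ((w - r).choose m : ℝ) * ((w - r - m : ℕ) : ℝ) ^ n) *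
            (w : ℝ) ^ n * ((L - w ^ 2 : ℕ) : ℝ) ^ (N - 1 - n) := by
  have hevent : (univ.filter fun τ : Fin (N - 1) → Fin L =>
      ∀ i : Fin w, i ∈ A ↔ ∀ k, block (τ k) ≠ some i)
        = ({τ | unblocked block τ = A} : Finset _) := by
    ext τ
    simp [unblocked, Finset.ext_iff, eq_comm]
  have hfactor : ∀ m ∈ range (w - r + 1),
      ((w - r - m : ℕ) : ℝ) * w + ((L - w ^ 2 : ℕ) : ℝ) = ((L - (r + m) * w : ℕ) : ℝ) := by
    intro m hmem
    have hm : m ≤ w - r := Nat.lt_succ_iff.1 (mem_range.1 hmem)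
    have hrm : (r + m) * w ≤ w ^ 2 := by rw [sq]; exact Nat.mul_le_mul_right w (by omega)
    rw [Nat.cast_sub hL, Nat.cast_sub (hrm.trans hL), Nat.cast_sub hm, Nat.cast_sub hr]
    push_cast
    ring
  have hcount : (#{τ : Fin (N - 1) → Fin L | unblocked block τ = A} : ℝ)
      = ∑ m ∈ range (w - r + 1), (-1 : ℝ) ^ m * ((w - r).choose m : ℝ) *
          ((L - (r + m) * w : ℕ) : ℝ) ^ (N - 1) := by
    have hcountInt := card_unblocked_eq (ι := Fin (N - 1)) hblock A
    rw [card_compl, hA, Fintype.card_fin, Fintype.card_fin, Fintype.card_fin] at hcountInt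
    exact_mod_cast hcountInt
  rw [hevent, hcount, sum_Icc_choose_mul_alternating_sum, one_div_mul_eq_div]
  exact congrArg (· / _) (sum_congr rfl fun m hm => by rw [hfactor m hm])

/-- blocking model for the probability `P_r`.  Each of the `N-1`
interfering users independently takes a uniform shift in `Z_L` (here `Fin L`);
`block s = some i` means shift `s` blocks the `i`-th of the `w` designated '1's
(exactly `w` shifts block each given '1', hence `L - w²` shifts block none).
The probability (number of shift-vectors divided by `L^{N-1}`) that the set of
surviving '1's is exactly a given `r`-set `A` equals
`(1/L^{N-1}) Σ_{n=w-r}^{N-1} C(N-1,n) (Σ_{m=0}^{w-r} (-1)^m C(w-r,m) (w-r-m)^n) w^n (L-w²)^{N-1-n}`. -/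
theorem stmt8 (N w L r : ℕ) (hN : 2 ≤ N) (hw : 0 < w) (hL : w ^ 2 ≤ L) (hr : r ≤ w)
    (block : Fin L → Option (Fin w))
    (hblock : ∀ i : Fin w, (Finset.univ.filter (fun s => block s = some i)).card = w)
    (A : Finset (Fin w)) (hA : A.card = r) :
    ((Finset.univ.filter (fun τ : Fin (N - 1) → Fin L =>
          ∀ i : Fin w, i ∈ A ↔ ∀ k, block (τ k) ≠ some i)).card : ℝ) / (L : ℝ) ^ (N - 1)
    = (1 / (L : ℝ) ^ (N - 1)) *
        ∑ n ∈ Finset.Icc (w - r) (N - 1),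
          ((N - 1).choose n : ℝ) *
            (∑ m ∈ Finset.range (w - r + 1),
              (-1 : ℝ) ^ m * ((w - r).choose m : ℝ) * ((w - r - m : ℕ) : ℝ) ^ n) *
            (w : ℝ) ^ n * ((L - w ^ 2 : ℕ) : ℝ) ^ (N - 1 - n) :=
  stmt8_general N w L r hL hr block hblock A hA
end

section
/- Let w, r be integers with 2 ≤ r ≤ w and let b_1, ..., b_w be real numbers. Then Σ over all cyclic sf-words e of length w with r occurrences of 's' of Σ_{k=0}^{r-1} F(d^e_k) equals Σ_{j=1}^{w} (w-j-1)! b_j / ( (r-2)! (w-j-(r-1))! ), where b_j = Σ_{k=0}^{w-1} F(ζ(k,j)) as before, and terms with w-j-(r-1) < 0 are zero. For r = 1, the sum equals b_w = w·F(L). -/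
/-!
Double counting over pairs `(e, p)` with `p ∈ e`: such a pair contributes `F (ζ(p, j))`, where `j`
is the cyclic gap from `p` to the next letter 's'. For `0 < j < w` the words with `#e = r` and gap
`j` at `p` are exactly `{p, p + j} ∪ T` with `T` an `(r - 2)`-subset of the `w - j - 1` positions
strictly between `p + j` and `p` (cyclically), so there are `C(w - j - 1, r - 2)` of them; the gap
`w` occurs only for `e = {p}`. Summing over `p` turns `F (ζ(p, j))` into `b_j`.
-/

open scoped Classical

/-- `zeta ℓ k j = ℓ_k + ℓ_{k+1} + ⋯ + ℓ_{k+j-1}` (indices cyclic mod `w`). -/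
def zeta {w : ℕ} [NeZero w] (ℓ : ZMod w → ℕ) (k : ZMod w) (j : ℕ) : ℕ :=
  ∑ i ∈ Finset.range j, ℓ (k + (i : ZMod w))

namespace Finset

variable {α β M : Type*} [Fintype α] [DecidableEq α] [DecidableEq β] [AddCommMonoid M]

theorem sum_sum_mem_eq_sum_card_smul (s : Finset (Finset α)) (t : Finset β)
    (g : Finset α → α → β) (f : α → β → M) (hg : ∀ e ∈ s, ∀ p ∈ e, g e p ∈ t) :
    ∑ e ∈ s, ∑ p ∈ e, f p (g e p) = ∑ p, ∑ j ∈ t, #{e ∈ s | p ∈ e ∧ g e p = j} • f p j := by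
  calc ∑ e ∈ s, ∑ p ∈ e, f p (g e p)
      = ∑ p, ∑ e ∈ s with p ∈ e, f p (g e p) := sum_comm' fun e p => by simp [and_comm]
    _ = _ := by
        refine sum_congr rfl fun p _ => ?_
        rw [← sum_fiberwise_of_maps_to (g := fun e => g e p) (t := t)
          (fun e he => hg e (mem_filter.1 he).1 p (mem_filter.1 he).2)]
        refine sum_congr rfl fun j _ => ?_
        rw [filter_filter, sum_congr rfl fun e he => by rw [(mem_filter.1 he).2.2], sum_const]

theorem card_filter_between_union_eq_choose {A B : Finset α} (hAB : Disjoint A B) (k : ℕ) :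
    #{e : Finset α | #e = #A + k ∧ A ⊆ e ∧ e ⊆ A ∪ B} = (#B).choose k := by
  rw [← card_powersetCard]
  refine card_nbij' (· \ A) (A ∪ ·) ?_ ?_ ?_ ?_
  · intro e he
    simp only [mem_coe, mem_filter, mem_univ, true_and, mem_powersetCard] at he ⊢
    refine ⟨sdiff_le_iff.2 he.2.2, ?_⟩
    rw [card_sdiff_of_subset he.2.1]
    omega
  · intro T hT
    simp only [mem_coe, mem_filter, mem_univ, true_and, mem_powersetCard] at hT ⊢
    exact ⟨by rw [card_union_of_disjoint (hAB.mono_right hT.1), hT.2], subset_union_left,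
      union_subset_union_right hT.1⟩
  · intro e he
    simp only [mem_coe, mem_filter] at he
    exact union_sdiff_of_subset he.2.2.1
  · intro T hT
    simp only [mem_coe, mem_powersetCard] at hT
    exact union_sdiff_cancel_left (hAB.mono_right hT.1)

end Finset

section CyclicGaps

open Finset

variable {w : ℕ}

theorem add_natCast_inj_of_lt (p : ZMod w) {a b : ℕ} (ha : a < w) (hb : b < w) :
    p + (a : ZMod w) = p + b ↔ a = b := by
  rw [add_right_inj, ZMod.natCast_eq_natCast_iff', Nat.mod_eq_of_lt ha, Nat.mod_eq_of_lt hb]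

variable [NeZero w]

theorem exists_lt_eq_add_natCast (p q : ZMod w) : ∃ i < w, q = p + (i : ZMod w) :=
  ⟨(q - p).val, ZMod.val_lt _, by rw [ZMod.natCast_zmod_val, add_sub_cancel]⟩

theorem cycGap_spec {S : Finset (ZMod w)} {p : ZMod w} (hp : p ∈ S) :
    0 < cycGap S p ∧ p + (cycGap S p : ZMod w) ∈ S ∧ cycGap S p ≤ w := by
  have hw : w ∈ {k : ℕ | 0 < k ∧ p + (k : ZMod w) ∈ S} :=
    ⟨Nat.pos_of_neZero w, by rwa [ZMod.natCast_self, add_zero]⟩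
  exact ⟨(Nat.sInf_mem ⟨w, hw⟩).1, (Nat.sInf_mem ⟨w, hw⟩).2, Nat.sInf_le hw⟩

theorem cycGap_eq_iff {S : Finset (ZMod w)} {p : ZMod w} (hp : p ∈ S) {j : ℕ} (hj : 0 < j) :
    cycGap S p = j ↔ p + (j : ZMod w) ∈ S ∧ ∀ k, 0 < k → k < j → p + (k : ZMod w) ∉ S := by
  obtain ⟨hpos, hmem, -⟩ := cycGap_spec hp
  have hle : ∀ k : ℕ, 0 < k → p + (k : ZMod w) ∈ S → cycGap S p ≤ k := fun k hk hkS =>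
    Nat.sInf_le ⟨hk, hkS⟩
  constructor
  · rintro rfl
    exact ⟨hmem, fun k hk hkj hkS => (hle k hk hkS).not_gt hkj⟩
  · rintro ⟨hjS, hmin⟩
    exact le_antisymm (hle j hj hjS) (not_lt.1 fun hlt => hmin _ hpos hlt hmem)

theorem cycGap_eq_iff_eq_singleton {S : Finset (ZMod w)} {p : ZMod w} (hp : p ∈ S) :
    cycGap S p = w ↔ S = {p} := by
  rw [cycGap_eq_iff hp (Nat.pos_of_neZero w), ZMod.natCast_self, add_zero]
  constructor
  · rintro ⟨-, hmin⟩
    refine eq_singleton_iff_unique_mem.2 ⟨hp, fun q hq => ?_⟩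
    obtain ⟨i, hiw, rfl⟩ := exists_lt_eq_add_natCast p q
    obtain rfl | hi := Nat.eq_zero_or_pos i
    · simp
    · exact absurd hq (hmin i hi hiw)
  · rintro rfl
    refine ⟨mem_singleton_self p, fun k hk hkw hkS => hk.ne' ?_⟩
    simpa using (add_natCast_inj_of_lt p hkw (Nat.pos_of_neZero w)).1 (by simpa using hkS)

theorem cycGap_eq_iff_subset {S : Finset (ZMod w)} {p : ZMod w} (hp : p ∈ S) {j : ℕ}
    (hj : 0 < j) (hjw : j < w) :
    cycGap S p = j ↔ {p, p + (j : ZMod w)} ⊆ S ∧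
      S ⊆ {p, p + (j : ZMod w)} ∪ (Ioo j w).image (fun i : ℕ => p + (i : ZMod w)) := by
  rw [cycGap_eq_iff hp hj]
  constructor
  · rintro ⟨hjS, hmin⟩
    refine ⟨insert_subset hp (singleton_subset_iff.2 hjS), fun q hq => ?_⟩
    obtain ⟨i, hiw, rfl⟩ := exists_lt_eq_add_natCast p q
    rcases lt_trichotomy i j with hij | rfl | hji
    · obtain rfl | hi := Nat.eq_zero_or_pos i
      · simp
      · exact absurd hq (hmin i hi hij)
    · simp
    · exact mem_union_right _ (mem_image.2 ⟨i, mem_Ioo.2 ⟨hji, hiw⟩, rfl⟩)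
  · rintro ⟨hAS, hSAB⟩
    refine ⟨hAS (by simp), fun k hk hkj hkS => ?_⟩
    have hkw : k < w := hkj.trans hjw
    rcases mem_union.1 (hSAB hkS) with hA | hB
    · rcases mem_insert.1 hA with h | h
      · refine hk.ne' ((add_natCast_inj_of_lt p hkw (Nat.pos_of_neZero w)).1 ?_)
        rwa [Nat.cast_zero, add_zero]
      · exact hkj.ne ((add_natCast_inj_of_lt p hkw hjw).1 (mem_singleton.1 h))
    · obtain ⟨i, hi, hik⟩ := mem_image.1 hB
      rw [add_natCast_inj_of_lt p (mem_Ioo.1 hi).2 hkw] at hik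
      exact (mem_Ioo.1 hi).1.not_gt (hik ▸ hkj)

theorem card_filter_cycGap_eq_choose {r : ℕ} (hr : 2 ≤ r) (p : ZMod w) {j : ℕ} (hj : 0 < j)
    (hjw : j < w) :
    #{e : Finset (ZMod w) | #e = r ∧ p ∈ e ∧ cycGap e p = j} = (w - j - 1).choose (r - 2) := by
  set A : Finset (ZMod w) := {p, p + (j : ZMod w)}
  set B := (Ioo j w).image (fun i : ℕ => p + (i : ZMod w))
  have hw := Nat.pos_of_neZero w
  have hA : #A = 2 := card_pair fun h =>
    hj.ne ((add_natCast_inj_of_lt p hw hjw).1 (by rwa [Nat.cast_zero, add_zero]))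
  have hB : #B = w - j - 1 := by
    rw [card_image_of_injOn fun a ha b hb hab =>
      (add_natCast_inj_of_lt p (mem_Ioo.1 ha).2 (mem_Ioo.1 hb).2).1 hab, Nat.card_Ioo]
  have hAB : Disjoint A B := by
    simp only [A, B, disjoint_insert_left, disjoint_singleton_left, mem_image, mem_Ioo,
      not_exists, not_and]
    refine ⟨fun i hi h => ?_, fun i hi h => ?_⟩
    · have := (add_natCast_inj_of_lt p hi.2 hw).1 (by rwa [Nat.cast_zero, add_zero])
      omega
    · exact hi.1.ne' ((add_natCast_inj_of_lt p hi.2 hjw).1 h)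
  rw [← hB, ← card_filter_between_union_eq_choose hAB]
  congr 1
  ext e
  simp only [mem_filter, mem_univ, true_and, hA]
  constructor
  · rintro ⟨he, hpe, hgap⟩
    exact ⟨by omega, (cycGap_eq_iff_subset hpe hj hjw).1 hgap⟩
  · rintro ⟨he, hAe, heAB⟩
    have hpe : p ∈ e := hAe (mem_insert_self _ _)
    exact ⟨by omega, hpe, (cycGap_eq_iff_subset hpe hj hjw).2 ⟨hAe, heAB⟩⟩

theorem card_filter_cycGap_eq {r : ℕ} (hr : 2 ≤ r) (p : ZMod w) {j : ℕ} (hj : j ∈ Icc 1 w) :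
    #{e : Finset (ZMod w) | #e = r ∧ p ∈ e ∧ cycGap e p = j} =
      if j + (r - 1) ≤ w then (w - j - 1).choose (r - 2) else 0 := by
  obtain ⟨hj, hjw⟩ := mem_Icc.1 hj
  obtain hjw | rfl := hjw.lt_or_eq
  · rw [card_filter_cycGap_eq_choose hr p hj hjw]
    split_ifs with hjr
    · rfl
    · exact Nat.choose_eq_zero_of_lt (by omega)
  · rw [if_neg (by omega), card_eq_zero, filter_eq_empty_iff]
    rintro e - ⟨he, hpe, hgap⟩
    rw [(cycGap_eq_iff_eq_singleton hpe).1 hgap, card_singleton] at he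
    omega

theorem cycGap_singleton (p : ZMod w) : cycGap {p} p = w :=
  (cycGap_eq_iff_eq_singleton (mem_singleton_self p)).2 rfl

theorem zeta_self (ℓ : ZMod w → ℕ) (k : ZMod w) : zeta ℓ k w = ∑ i, ℓ i := by
  rw [zeta, ← Equiv.sum_comp (Equiv.addLeft k)]
  refine sum_nbij' (fun i : ℕ => (i : ZMod w)) ZMod.val (fun _ _ => mem_univ _)
    (fun x _ => mem_range.2 (ZMod.val_lt x)) (fun i hi => ZMod.val_cast_of_lt (mem_range.1 hi))
    (fun x _ => ZMod.natCast_zmod_val x) (fun _ _ => rfl)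

end CyclicGaps

theorem stmt13_general (w r L : ℕ) [NeZero w] (hr : 2 ≤ r)
    (ℓ : ZMod w → ℕ) (hsum : ∑ k, ℓ k = L) (F : ℕ → ℝ) :
    (∑ e ∈ Finset.univ.filter (fun e : Finset (ZMod w) => e.card = r),
        ∑ p ∈ e, F (zeta ℓ p (cycGap e p))
      = ∑ j ∈ Finset.Icc 1 w,
          if j + (r - 1) ≤ w then
            ((w - j - 1).factorial : ℝ) * (∑ k : ZMod w, F (zeta ℓ k j))
              / (((r - 2).factorial : ℝ) * ((w - j - (r - 1)).factorial : ℝ))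
          else 0) ∧
    (∑ e ∈ Finset.univ.filter (fun e : Finset (ZMod w) => e.card = 1),
        ∑ p ∈ e, F (zeta ℓ p (cycGap e p)) = (w : ℝ) * F L) := by
  constructor
  · have hgap : ∀ e ∈ Finset.univ.filter (fun e : Finset (ZMod w) => e.card = r), ∀ p ∈ e,
        cycGap e p ∈ Finset.Icc 1 w :=
      fun e _ p hp => Finset.mem_Icc.2 ⟨(cycGap_spec hp).1, (cycGap_spec hp).2.2⟩
    rw [Finset.sum_sum_mem_eq_sum_card_smul _ _ _ (fun p j => F (zeta ℓ p j)) hgap,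
      Finset.sum_comm]
    refine Finset.sum_congr rfl fun j hj => ?_
    simp_rw [Finset.filter_filter, card_filter_cycGap_eq hr _ hj]
    split_ifs with hjr
    · rw [← Finset.smul_sum, nsmul_eq_mul, Nat.cast_choose ℝ (by omega : r - 2 ≤ w - j - 1),
        show w - j - 1 - (r - 2) = w - j - (r - 1) by omega]
      ring
    · simp
  · rw [Finset.univ_filter_card_eq, Finset.powersetCard_one, Finset.sum_map]
    simp [cycGap_singleton, zeta_self, hsum]

/-- Theorem 2: with `2 ≤ r ≤ w` and `b_j = Σ_k F(ζ(k,j))`,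
the sum over all cyclic sf-words with `r` letters 's' of `Σ_k F(d^e_k)` equals
`Σ_{j=1}^w (w-j-1)! b_j / ((r-2)! (w-j-(r-1))!)` (terms with `w-j-(r-1) < 0` being zero);
and for `r = 1` the corresponding sum equals `b_w = w·F(L)`. -/
theorem stmt13 (w r L : ℕ) [NeZero w] (hr : 2 ≤ r) (hrw : r ≤ w)
    (ℓ : ZMod w → ℕ) (hpos : ∀ k, 0 < ℓ k) (hsum : ∑ k, ℓ k = L) (F : ℕ → ℝ) :
    (∑ e ∈ Finset.univ.filter (fun e : Finset (ZMod w) => e.card = r),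
        ∑ p ∈ e, F (zeta ℓ p (cycGap e p))
      = ∑ j ∈ Finset.Icc 1 w,
          if j + (r - 1) ≤ w then
            ((w - j - 1).factorial : ℝ) * (∑ k : ZMod w, F (zeta ℓ k j))
              / (((r - 2).factorial : ℝ) * ((w - j - (r - 1)).factorial : ℝ))
          else 0) ∧
    (∑ e ∈ Finset.univ.filter (fun e : Finset (ZMod w) => e.card = 1),
        ∑ p ∈ e, F (zeta ℓ p (cycGap e p)) = (w : ℝ) * F L) :=
  stmt13_general w r L hr ℓ hsum F
end

section
/- Let p be a prime and q an integer coprime with p, L = pq, w = p. The characteristic sets I_1, ..., I_{p+1} of the p+1 CRT sequences satisfy: the difference set of the sequence v_1 (with characteristic set {0, 1, ..., p-1}) is {±1, ..., ±(p-1)} mod L, and for each g ∈ {2, ..., p+1}, the difference set of I_g is disjoint from {±1, ..., ±(p-1)} mod L; consequently, any two distinct elements of I_g (for g ≥ 2) have cyclic distance at least p in Z_L. -/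
/-!
A cyclic difference `d` of `I_g` that is `< p` or `> pq - p` is congruent mod `pq` to some
`ε` with `|ε| < p`, and we show `ε = 0`. For `g = p + 1` all elements are multiples of `q ≥ p`,
so `q ∣ ε`. For `g ≤ p`, write `t = Φ(u, ug)`, `t' = Φ(u', u'g)`: reducing mod `q` forces
`ε = u - u'` since `q ≥ 2p - 1`, and reducing mod `p` then gives `ε g ≡ ε`, so `p ∣ ε (g - 1)`
with `1 ≤ g - 1 < p`, hence `p ∣ ε`.
-/

open scoped Classical

/-- Characteristic set of the CRT sequence `v_g`, as a subset of `{0,…,pq-1}`: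
for `1 ≤ g ≤ p`, `I_g = {t : t ≡ ug (mod p), t ≡ u (mod q), some u ∈ Z_p}`;
for `g = p+1`, `I_{p+1} = {t : t ≡ u (mod p), t ≡ 0 (mod q), some u ∈ Z_p}`. -/
noncomputable def crtCharSet (p q g : ℕ) : Finset ℕ :=
  (Finset.range (p * q)).filter (fun t =>
    if g = p + 1 then ∃ u < p, t % p = u % p ∧ t % q = 0
    else ∃ u < p, t % p = (u * g) % p ∧ t % q = u % q)

theorem mem_crtCharSet_of_ne {p q g t : ℕ} (hg : g ≠ p + 1) :
    t ∈ crtCharSet p q g ↔ t < p * q ∧ ∃ u < p, t ≡ u * g [MOD p] ∧ t ≡ u [MOD q] := by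
  simp only [crtCharSet, Finset.mem_filter, Finset.mem_range, if_neg hg, Nat.ModEq]

theorem mem_crtCharSet_last {p q t : ℕ} :
    t ∈ crtCharSet p q (p + 1) ↔ t < p * q ∧ ∃ u < p, t ≡ u [MOD p] ∧ q ∣ t := by
  simp only [crtCharSet, Finset.mem_filter, Finset.mem_range, if_pos, Nat.ModEq,
    Nat.dvd_iff_mod_eq_zero]

theorem lt_of_mem_crtCharSet {p q g t : ℕ} (ht : t ∈ crtCharSet p q g) : t < p * q :=
  Finset.mem_range.mp (Finset.mem_filter.mp ht).1

theorem crtCharSet_one {p q : ℕ} (hp : p ≠ 0) (hq : q ≠ 0) (hco : p.Coprime q) :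
    crtCharSet p q 1 = Finset.range p := by
  have hpL : p ≤ p * q := Nat.le_mul_of_pos_right p (Nat.pos_of_ne_zero hq)
  ext t
  rw [mem_crtCharSet_of_ne (by omega), Finset.mem_range]
  constructor
  · rintro ⟨htL, u, hu, htu, htu'⟩
    rw [mul_one] at htu
    have := ((Nat.modEq_and_modEq_iff_modEq_mul hco).mp ⟨htu, htu'⟩).eq_of_lt_of_lt htL (by omega)
    omega
  · intro ht
    exact ⟨by omega, t, ht, by rw [mul_one], rfl⟩

theorem image_sub_mod_range {p L : ℕ} (hL : 0 < L) (hpL : p ≤ L) :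
    ((Finset.range p ×ˢ Finset.range p).filter (fun ab => ab.1 ≠ ab.2)).image
        (fun ab => (ab.1 + L - ab.2) % L)
      = Finset.Icc 1 (p - 1) ∪ Finset.Icc (L - (p - 1)) (L - 1) := by
  ext d
  simp only [Finset.mem_image, Finset.mem_filter, Finset.mem_product, Finset.mem_range,
    Finset.mem_union, Finset.mem_Icc, Prod.exists]
  constructor
  · rintro ⟨a, b, ⟨⟨ha, hb⟩, hab⟩, rfl⟩
    rcases lt_or_gt_of_ne hab with h | h
    · rw [Nat.mod_eq_of_lt (by omega)]
      omega
    · rw [show a + L - b = a - b + L by omega, Nat.add_mod_right, Nat.mod_eq_of_lt (by omega)]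
      omega
  · rintro (⟨h1, h2⟩ | ⟨h1, h2⟩)
    · refine ⟨d, 0, ⟨⟨by omega, by omega⟩, by omega⟩, ?_⟩
      rw [Nat.sub_zero, Nat.add_mod_right, Nat.mod_eq_of_lt (by omega)]
    · refine ⟨0, L - d, ⟨⟨by omega, by omega⟩, by omega⟩, ?_⟩
      rw [show 0 + L - (L - d) = d by omega, Nat.mod_eq_of_lt (by omega)]

theorem sub_mod_modEq {L t t' : ℕ} (ht' : t' ≤ L) :
    (((t + L - t') % L : ℕ) : ℤ) ≡ t - t' [ZMOD L] := by
  rw [Int.ModEq, Int.natCast_mod, Int.emod_emod_of_dvd _ dvd_rfl, Nat.cast_sub (by omega),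
    Nat.cast_add, add_sub_right_comm, Int.add_emod_right]

theorem le_sub_mod_and_sub_mod_le {L m t t' : ℕ} (ht : t < L) (ht' : t' < L) (hne : t ≠ t')
    (h : ∀ ε : ℤ, |ε| < m → ε ≡ t - t' [ZMOD L] → ε = 0) :
    m ≤ (t + L - t') % L ∧ (t + L - t') % L ≤ L - m := by
  have hd := sub_mod_modEq (t := t) ht'.le
  have hdL : (t + L - t') % L < L := Nat.mod_lt _ (by omega)
  set d := (t + L - t') % L
  constructor
  · by_contra! hdm
    have hd0 : (d : ℤ) = 0 := h d (by rw [abs_lt]; omega) hd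
    have htt' : (t' : ℤ) ≡ t [ZMOD L] := by simpa [hd0] using hd.add_right (t' : ℤ)
    exact hne (Int.natCast_modEq_iff.mp htt' |>.eq_of_lt_of_lt ht' ht).symm
  · by_contra! hdm
    have := h (d - L) (by rw [abs_lt]; omega)
      ((Int.modEq_iff_dvd.mpr (by simp)).trans hd)
    omega

theorem eq_zero_of_mul_modEq_self {p : ℕ} (hp : p.Prime) {g ε : ℤ} (hg : ¬ (p : ℤ) ∣ g - 1)
    (hε : |ε| < p) (h : ε * g ≡ ε [ZMOD p]) : ε = 0 := by
  have hdvd : (p : ℤ) ∣ ε * (g - 1) := by simpa [mul_sub] using h.symm.dvd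
  rcases (Nat.prime_iff_prime_int.mp hp).dvd_or_dvd hdvd with hpε | hpg
  · exact Int.eq_zero_of_abs_lt_dvd hpε hε
  · exact absurd hpg hg

theorem eq_zero_of_modEq_sub_of_mem_crtCharSet_last {p q t t' : ℕ} {ε : ℤ} (hpq : p ≤ q)
    (ht : t ∈ crtCharSet p q (p + 1)) (ht' : t' ∈ crtCharSet p q (p + 1)) (hε : |ε| < p)
    (h : ε ≡ t - t' [ZMOD p * q]) : ε = 0 := by
  obtain ⟨-, -, -, -, hqt⟩ := mem_crtCharSet_last.mp ht
  obtain ⟨-, -, -, -, hqt'⟩ := mem_crtCharSet_last.mp ht'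
  have hqε : (q : ℤ) ∣ ε :=
    (h.of_mul_left _).dvd_iff.mpr (dvd_sub (by exact_mod_cast hqt) (by exact_mod_cast hqt'))
  exact Int.eq_zero_of_abs_lt_dvd hqε (by omega)

theorem eq_zero_of_modEq_sub_of_mem_crtCharSet {p q g t t' : ℕ} {ε : ℤ} (hp : p.Prime)
    (hq : 2 * p - 1 ≤ q) (hg : 2 ≤ g) (hgp : g ≤ p) (ht : t ∈ crtCharSet p q g)
    (ht' : t' ∈ crtCharSet p q g) (hε : |ε| < p) (h : ε ≡ t - t' [ZMOD p * q]) : ε = 0 := by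
  obtain ⟨-, u, hu, htp, htq⟩ := (mem_crtCharSet_of_ne (by omega)).mp ht
  obtain ⟨-, u', hu', ht'p, ht'q⟩ := (mem_crtCharSet_of_ne (by omega)).mp ht'
  have hεu : ε = u - u' := by
    have hmodq : ε ≡ u - u' [ZMOD q] := (h.of_mul_left _).trans
      ((Int.natCast_modEq_iff.mpr htq).sub (Int.natCast_modEq_iff.mpr ht'q))
    -- both `ε` and `u - u'` lie in `(-p, p)`, an interval shorter than `q`
    have := Int.eq_zero_of_abs_lt_dvd hmodq.dvd (by rw [abs_lt] at hε ⊢; omega)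
    linarith
  have hεg : ε * g ≡ ε [ZMOD p] := by
    have hmodp := (Int.natCast_modEq_iff.mpr htp).sub (Int.natCast_modEq_iff.mpr ht'p)
    push_cast at hmodp
    calc ε * g = u * g - u' * g := by rw [hεu]; ring
      _ ≡ t - t' [ZMOD p] := hmodp.symm
      _ ≡ ε [ZMOD p] := (h.of_mul_right _).symm
  refine eq_zero_of_mul_modEq_self hp (fun hpg => ?_) hε hεg
  have := Int.le_of_dvd (by omega) hpg
  omega

/-- for `p` prime, `q ≥ 2p-1` coprime with `p`, `L = pq`, `w = p`:
(1) `I_1 = {0, 1, …, p-1}`;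
(2) the difference set of `I_1` is `{±1, …, ±(p-1)} mod L`, i.e. the set of cyclic
differences of distinct elements of `{0,…,p-1}` is `{1,…,p-1} ∪ {L-(p-1),…,L-1}`;
(3) for each `g ∈ {2,…,p+1}`, the difference set of `I_g` is disjoint from
`{±1,…,±(p-1)} mod L`: any two distinct elements of `I_g` have cyclic difference `d`
with `p ≤ d ≤ L - p` (in particular, cyclic distance at least `p`). -/
theorem stmt19 (p q : ℕ) (hp : p.Prime) (hco : Nat.Coprime p q) (hq : 2 * p - 1 ≤ q) :
    (crtCharSet p q 1 = Finset.range p) ∧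
    (((Finset.range p ×ˢ Finset.range p).filter (fun ab => ab.1 ≠ ab.2)).image
        (fun ab => (ab.1 + p * q - ab.2) % (p * q))
      = Finset.Icc 1 (p - 1) ∪ Finset.Icc (p * q - (p - 1)) (p * q - 1)) ∧
    (∀ g, 2 ≤ g → g ≤ p + 1 →
      ∀ t ∈ crtCharSet p q g, ∀ t' ∈ crtCharSet p q g, t ≠ t' →
        p ≤ (t + p * q - t') % (p * q) ∧ (t + p * q - t') % (p * q) ≤ p * q - p) := by
  have hp2 := hp.two_le
  have hpL : p ≤ p * q := Nat.le_mul_of_pos_right p (by omega)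
  refine ⟨crtCharSet_one hp.ne_zero (by omega) hco, image_sub_mod_range (by omega) hpL, ?_⟩
  intro g hg hgp t ht t' ht' hne
  refine le_sub_mod_and_sub_mod_le (lt_of_mem_crtCharSet ht) (lt_of_mem_crtCharSet ht') hne
    fun ε hε h => ?_
  push_cast at h
  rcases (show g = p + 1 ∨ g ≤ p by omega) with rfl | hgp
  · exact eq_zero_of_modEq_sub_of_mem_crtCharSet_last (by omega) ht ht' hε h
  · exact eq_zero_of_modEq_sub_of_mem_crtCharSet hp hq hg hgp ht ht' hε h
end
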